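/- arXiv:1409.0695 — 10 statements merged into one kernel-verified Lean document; each statement's English description precedes it below -/
import Mathlib

section
/- Let (S, P) be pointwise k-poly-Poisson data on a real vector space V and set D := P(S) ⊆ V. Then there is a unique ℝ^k-valued bilinear form ω on D with ω(P(η), P(γ)) = η(P(γ)) for all η, γ ∈ S; moreover ω is alternating and nondegenerate on D (the map D → Hom(D, ℝ^k), X ↦ ω(X, ·), is injective). (This is the fiberwise construction of the poly-symplectic forms on the leaves of the foliation of a poly-Poisson manifold.) -/
/-!
Polarizing `η (P η) = 0` gives `η (P γ) = -γ (P η)`. Hence `η` restricted to `D = P(S)` depends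
only on `P η`, so `P η ↦ η|_D` is a well-defined linear map `D → Hom(D, ℝ^k)`; this is `ω`, and
it is unique since every element of `D` is some `P η`. Antisymmetry of `ω` is the polarized
identity, and `ω (P η) = 0` forces `γ (P η) = 0` for every `γ ∈ S`, i.e. `P η ∈ S° = 0`.
-/

namespace PolyPoisson

open LinearMap

variable {R V W : Type*} [CommRing R] [AddCommGroup V] [Module R V] [AddCommGroup W]
  [Module R W] {S : Submodule R (V →ₗ[R] W)} {P : S →ₗ[R] V}

theorem apply_apply_eq_neg (hP : ∀ η : S, (η : V →ₗ[R] W) (P η) = 0) (η γ : S) :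
    (η : V →ₗ[R] W) (P γ) = -(γ : V →ₗ[R] W) (P η) := by
  have h := hP (η + γ)
  simp only [Submodule.coe_add, map_add, LinearMap.add_apply, hP η, hP γ, zero_add,
    add_zero] at h
  exact eq_neg_of_add_eq_zero_right h

variable (S P) in
def restrictToRange : S →ₗ[R] range P →ₗ[R] W :=
  lcomp R W (range P).subtype ∘ₗ S.subtype

theorem ker_le_ker_restrictToRange (hP : ∀ η : S, (η : V →ₗ[R] W) (P η) = 0) :
    ker P ≤ ker (restrictToRange S P) := by
  intro η hη
  ext ⟨_, γ, rfl⟩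
  simp [restrictToRange, apply_apply_eq_neg hP η γ, mem_ker.mp hη]

noncomputable def form (hP : ∀ η : S, (η : V →ₗ[R] W) (P η) = 0) :
    range P →ₗ[R] range P →ₗ[R] W :=
  (ker P).liftQ (restrictToRange S P) (ker_le_ker_restrictToRange hP) ∘ₗ
    P.quotKerEquivRange.symm.toLinearMap

theorem form_apply (hP : ∀ η : S, (η : V →ₗ[R] W) (P η) = 0) (η γ : S) :
    form hP ⟨P η, mem_range_self P η⟩ ⟨P γ, mem_range_self P γ⟩ = (η : V →ₗ[R] W) (P γ) := by
  simp [form, quotKerEquivRange_symm_apply_image, restrictToRange]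

theorem eq_form (hP : ∀ η : S, (η : V →ₗ[R] W) (P η) = 0)
    {ω : range P →ₗ[R] range P →ₗ[R] W}
    (hω : ∀ η γ : S, ω ⟨P η, mem_range_self P η⟩ ⟨P γ, mem_range_self P γ⟩ =
      (η : V →ₗ[R] W) (P γ)) :
    ω = form hP := by
  ext ⟨_, η, rfl⟩ ⟨_, γ, rfl⟩
  rw [hω, form_apply]

theorem form_apply_swap (hP : ∀ η : S, (η : V →ₗ[R] W) (P η) = 0) (X Y : range P) :
    form hP X Y = -form hP Y X := by
  obtain ⟨_, η, rfl⟩ := X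
  obtain ⟨_, γ, rfl⟩ := Y
  rw [form_apply, form_apply, apply_apply_eq_neg hP]

theorem form_injective (hP : ∀ η : S, (η : V →ₗ[R] W) (P η) = 0)
    (hS : ∀ X : V, (∀ η ∈ S, η X = 0) → X = 0) :
    Function.Injective (form hP) := by
  refine (injective_iff_map_eq_zero _).mpr ?_
  rintro ⟨_, η, rfl⟩ hη
  refine Subtype.ext (hS _ fun γ hγ => ?_)
  calc γ (P η) = -(η : V →ₗ[R] W) (P ⟨γ, hγ⟩) := apply_apply_eq_neg hP ⟨γ, hγ⟩ η
    _ = 0 := by rw [← form_apply hP, hη, LinearMap.zero_apply, neg_zero]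

end PolyPoisson

open PolyPoisson in
theorem stmt3_general (k : ℕ) (V : Type*) [AddCommGroup V] [Module ℝ V]
    (S : Submodule ℝ (V →ₗ[ℝ] (Fin k → ℝ))) (P : S →ₗ[ℝ] V)
    (h1 : ∀ η : S, (η : V →ₗ[ℝ] (Fin k → ℝ)) (P η) = 0)
    (h2 : ∀ X : V, (∀ η ∈ S, η X = 0) → X = 0) :
    (∃! ω : LinearMap.range P →ₗ[ℝ] LinearMap.range P →ₗ[ℝ] (Fin k → ℝ),
      ∀ η γ : S,
        ω ⟨P η, LinearMap.mem_range_self P η⟩ ⟨P γ, LinearMap.mem_range_self P γ⟩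
          = (η : V →ₗ[ℝ] (Fin k → ℝ)) (P γ)) ∧
    (∀ ω : LinearMap.range P →ₗ[ℝ] LinearMap.range P →ₗ[ℝ] (Fin k → ℝ),
      (∀ η γ : S,
        ω ⟨P η, LinearMap.mem_range_self P η⟩ ⟨P γ, LinearMap.mem_range_self P γ⟩
          = (η : V →ₗ[ℝ] (Fin k → ℝ)) (P γ)) →
      (∀ X Y : LinearMap.range P, ω X Y = - ω Y X) ∧ Function.Injective ⇑ω) := by
  refine ⟨⟨form h1, form_apply h1, fun ω hω => eq_form h1 hω⟩, fun ω hω => ?_⟩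
  obtain rfl := eq_form h1 hω
  exact ⟨form_apply_swap h1, form_injective h1 h2⟩

/-- For pointwise `k`-poly-Poisson data `(S, P)` on `V` and `D := P(S)`,
there is a unique `ℝ^k`-valued bilinear form `ω` on `D` with `ω(P(η), P(γ)) = η(P(γ))`;
moreover any such `ω` is alternating and nondegenerate. -/
theorem stmt3 (k : ℕ) (hk : 0 < k) (V : Type*) [AddCommGroup V] [Module ℝ V]
    (S : Submodule ℝ (V →ₗ[ℝ] (Fin k → ℝ))) (P : S →ₗ[ℝ] V)
    (h1 : ∀ η : S, (η : V →ₗ[ℝ] (Fin k → ℝ)) (P η) = 0)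
    (h2 : ∀ X : V, (∀ η ∈ S, η X = 0) → X = 0) :
    (∃! ω : LinearMap.range P →ₗ[ℝ] LinearMap.range P →ₗ[ℝ] (Fin k → ℝ),
      ∀ η γ : S,
        ω ⟨P η, LinearMap.mem_range_self P η⟩ ⟨P γ, LinearMap.mem_range_self P γ⟩
          = (η : V →ₗ[ℝ] (Fin k → ℝ)) (P γ)) ∧
    (∀ ω : LinearMap.range P →ₗ[ℝ] LinearMap.range P →ₗ[ℝ] (Fin k → ℝ),
      (∀ η γ : S,
        ω ⟨P η, LinearMap.mem_range_self P η⟩ ⟨P γ, LinearMap.mem_range_self P γ⟩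
          = (η : V →ₗ[ℝ] (Fin k → ℝ)) (P γ)) →
      (∀ X Y : LinearMap.range P, ω X Y = - ω Y X) ∧ Function.Injective ⇑ω) :=
  stmt3_general k V S P h1 h2
end

section
/- Let V be a finite-dimensional real vector space, let D ⊆ V be a subspace, and let ω be a nondegenerate ℝ^k-valued 2-form on D. Let S := {η ∈ Hom(V, ℝ^k) : there exists X ∈ D with η(Y) = ω(X, Y) for all Y ∈ D}. Then for every η ∈ S the element X ∈ D with η(Y) = ω(X, Y) for all Y ∈ D is unique; the resulting map P : S → V, P(η) := X, is linear, its range equals D, and η(P(η)) = 0 for all η ∈ S. (Together with S° = {0}, this is the pointwise content of the construction of a poly-Poisson structure from a regular poly-symplectic foliation.) -/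
/-!
Nondegeneracy makes `ω^♭ : D → Hom(D, ℝ^k)` a linear isomorphism onto its range, so `P` is the
restriction `η ↦ η|_D` followed by the inverse of `ω^♭`; it is onto `D` because every
`ω(X, ·)` extends from `D` to `V`. Finally `η(P η) = ω(P η, P η)` vanishes since `ω` is skew.
-/

namespace LinearMap

section CommRing

variable {R V M : Type*} [CommRing R] [AddCommGroup V] [Module R V] [AddCommGroup M] [Module R M]
  {D : Submodule R V} (ω : D →ₗ[R] D →ₗ[R] M)

/-- The space `S` of the poly-Poisson construction. -/
def hamiltonianForms : Submodule R (V →ₗ[R] M) :=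
  (range ω).comap (domRestrict' D)

theorem mem_hamiltonianForms {η : V →ₗ[R] M} :
    η ∈ hamiltonianForms ω ↔ ∃ X : D, ∀ Y : D, η Y = ω X Y := by
  simp only [hamiltonianForms, Submodule.mem_comap, mem_range, LinearMap.ext_iff,
    domRestrict'_apply, eq_comm]

theorem eq_of_forall_apply_eq (hnd : Function.Injective ω) {η : V →ₗ[R] M} {X X' : D}
    (hX : ∀ Y : D, η Y = ω X Y) (hX' : ∀ Y : D, η Y = ω X' Y) : X = X' :=
  hnd <| LinearMap.ext fun Y => (hX Y).symm.trans (hX' Y)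

/-- The map `P` of the poly-Poisson construction, with values in `D`. -/
noncomputable def hamiltonianVector (hnd : Function.Injective ω) : hamiltonianForms ω →ₗ[R] D :=
  (LinearEquiv.ofInjective ω hnd).symm.toLinearMap ∘ₗ (domRestrict' D).restrict fun _ h => h

theorem apply_eq_hamiltonianVector (hnd : Function.Injective ω) (η : hamiltonianForms ω)
    (Y : D) :
    (η : V →ₗ[R] M) Y = ω (hamiltonianVector ω hnd η) Y := by
  simp only [hamiltonianVector, coe_comp, LinearEquiv.coe_coe, Function.comp_apply,
    LinearEquiv.ofInjective_symm_apply]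
  rfl

theorem hamiltonianVector_eq (hnd : Function.Injective ω) (η : hamiltonianForms ω) {X : D}
    (hX : ∀ Y : D, (η : V →ₗ[R] M) Y = ω X Y) : hamiltonianVector ω hnd η = X :=
  eq_of_forall_apply_eq ω hnd (apply_eq_hamiltonianVector ω hnd η) hX

theorem apply_hamiltonianVector_eq_zero [IsAddTorsionFree M] (halt : ∀ X Y : D, ω X Y = -ω Y X)
    (hnd : Function.Injective ω) (η : hamiltonianForms ω) :
    (η : V →ₗ[R] M) (hamiltonianVector ω hnd η) = 0 := by
  rw [apply_eq_hamiltonianVector ω hnd η, ← self_eq_neg]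
  exact halt _ _

end CommRing

section Field

variable {K V M : Type*} [Field K] [AddCommGroup V] [Module K V] [AddCommGroup M] [Module K M]
  {D : Submodule K V} (ω : D →ₗ[K] D →ₗ[K] M)

theorem range_hamiltonianVector (hnd : Function.Injective ω) :
    range (hamiltonianVector ω hnd) = ⊤ := by
  refine eq_top_iff.2 fun X _ => ?_
  obtain ⟨η, hη⟩ := exists_extend (ω X)
  have hX : ∀ Y : D, η Y = ω X Y := fun Y => LinearMap.congr_fun hη Y
  exact ⟨⟨η, (mem_hamiltonianForms ω).2 ⟨X, hX⟩⟩, hamiltonianVector_eq ω hnd _ hX⟩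

end Field

end LinearMap

theorem stmt6_general (k : ℕ) (V : Type*) [AddCommGroup V] [Module ℝ V]
    (D : Submodule ℝ V)
    (ω : D →ₗ[ℝ] D →ₗ[ℝ] (Fin k → ℝ))
    (halt : ∀ X Y : D, ω X Y = - ω Y X)
    (hnd : Function.Injective ⇑ω) :
    (∀ η : V →ₗ[ℝ] (Fin k → ℝ), (∃ X : D, ∀ Y : D, η (Y : V) = ω X Y) →
      ∃! X : D, ∀ Y : D, η (Y : V) = ω X Y) ∧
    (∃ S : Submodule ℝ (V →ₗ[ℝ] (Fin k → ℝ)),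
      (S : Set (V →ₗ[ℝ] (Fin k → ℝ))) = {η | ∃ X : D, ∀ Y : D, η (Y : V) = ω X Y} ∧
      ∃ P : S →ₗ[ℝ] V,
        (∀ η : S, ∃ X : D, (X : V) = P η ∧
          ∀ Y : D, (η : V →ₗ[ℝ] (Fin k → ℝ)) (Y : V) = ω X Y) ∧
        LinearMap.range P = D ∧
        (∀ η : S, (η : V →ₗ[ℝ] (Fin k → ℝ)) (P η) = 0)) := by
  refine ⟨fun η ⟨X, hX⟩ => ⟨X, hX, fun X' hX' => ω.eq_of_forall_apply_eq hnd hX' hX⟩,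
    ω.hamiltonianForms, Set.ext fun η => ω.mem_hamiltonianForms,
    D.subtype ∘ₗ ω.hamiltonianVector hnd,
    fun η => ⟨_, rfl, ω.apply_eq_hamiltonianVector hnd η⟩, ?_,
    ω.apply_hamiltonianVector_eq_zero halt hnd⟩
  rw [LinearMap.range_comp, ω.range_hamiltonianVector hnd, Submodule.map_top,
    Submodule.range_subtype]

/-- With `S := {η ∈ Hom(V, ℝ^k) : ∃ X ∈ D, η|_D = ω(X, ·)}` for a
nondegenerate `ℝ^k`-valued 2-form `ω` on a subspace `D` of a finite-dimensional `V`: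
for each `η ∈ S` the witness `X ∈ D` is unique; `S` is a subspace, and the resulting map
`P : S → V` is linear, has range `D`, and satisfies `η(P(η)) = 0` for all `η ∈ S`. -/
theorem stmt6 (k : ℕ) (hk : 0 < k) (V : Type*) [AddCommGroup V] [Module ℝ V]
    [FiniteDimensional ℝ V] (D : Submodule ℝ V)
    (ω : D →ₗ[ℝ] D →ₗ[ℝ] (Fin k → ℝ))
    (halt : ∀ X Y : D, ω X Y = - ω Y X)
    (hnd : Function.Injective ⇑ω) :
    (∀ η : V →ₗ[ℝ] (Fin k → ℝ), (∃ X : D, ∀ Y : D, η (Y : V) = ω X Y) →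
      ∃! X : D, ∀ Y : D, η (Y : V) = ω X Y) ∧
    (∃ S : Submodule ℝ (V →ₗ[ℝ] (Fin k → ℝ)),
      (S : Set (V →ₗ[ℝ] (Fin k → ℝ))) = {η | ∃ X : D, ∀ Y : D, η (Y : V) = ω X Y} ∧
      ∃ P : S →ₗ[ℝ] V,
        (∀ η : S, ∃ X : D, (X : V) = P η ∧
          ∀ Y : D, (η : V →ₗ[ℝ] (Fin k → ℝ)) (Y : V) = ω X Y) ∧
        LinearMap.range P = D ∧
        (∀ η : S, (η : V →ₗ[ℝ] (Fin k → ℝ)) (P η) = 0)) :=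
  stmt6_general k V D ω halt hnd
end

section
/- Let V be a real vector space and L ⊆ A := V ⊕ Hom(V, ℝ^k) a linear subspace such that L ⊆ L^⊥, L ∩ (V ⊕ 0) = {0}, and the projection A → V maps L onto V. Then there is a unique nondegenerate ℝ^k-valued 2-form ω on V with L = {X ⊕ ω^♭(X) : X ∈ V}. (Hence poly-symplectic structures correspond exactly to AV-Dirac type subspaces projecting isomorphically onto V.) -/
/-!
Pairing an element `(0, δ)` of `L` with the elements of `L` lying over every `Y : V` shows
`δ = 0`, so `L` meets each fibre of the projection to `V` exactly once and is the graph of a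
linear map `ω : V → Hom(V, W)`. Isotropy of the graph is antisymmetry of `ω`, and
`L ∩ (V ⊕ 0) = 0` is injectivity of `ω`.
-/

theorem LinearMap.graph_injective {R M M₂ : Type*} [Semiring R] [AddCommMonoid M]
    [AddCommMonoid M₂] [Module R M] [Module R M₂] :
    Function.Injective (LinearMap.graph : (M →ₗ[R] M₂) → Submodule R (M × M₂)) := by
  intro f g hfg
  ext x
  exact (SetLike.ext_iff.mp hfg (x, f x)).mp rfl

namespace Submodule

variable {R V W : Type*} [CommRing R] [AddCommGroup V] [Module R V] [AddCommGroup W]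
  [Module R W] {L : Submodule R (V × (V →ₗ[R] W))}

theorem eq_zero_of_mk_zero_mem (hiso : ∀ a ∈ L, ∀ b ∈ L, b.2 a.1 + a.2 b.1 = 0)
    (hproj : ∀ X : V, ∃ η : V →ₗ[R] W, (X, η) ∈ L) {δ : V →ₗ[R] W} (hδ : ((0 : V), δ) ∈ L) :
    δ = 0 := by
  ext Y
  obtain ⟨γ, hγ⟩ := hproj Y
  simpa using hiso _ hδ _ hγ

theorem exists_eq_graph_of_isotropic (hiso : ∀ a ∈ L, ∀ b ∈ L, b.2 a.1 + a.2 b.1 = 0)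
    (hproj : ∀ X : V, ∃ η : V →ₗ[R] W, (X, η) ∈ L) :
    ∃ ω : V →ₗ[R] V →ₗ[R] W, L = ω.graph := by
  refine exists_eq_graph ⟨?_, fun X ↦ ?_⟩
  · rintro ⟨⟨X, η⟩, hη⟩ ⟨⟨Y, γ⟩, hγ⟩ (rfl : X = Y)
    have hmem : ((0 : V), η - γ) ∈ L := by
      simpa only [Prod.mk_sub_mk, sub_self] using L.sub_mem hη hγ
    obtain rfl := sub_eq_zero.mp (eq_zero_of_mk_zero_mem hiso hproj hmem)
    rfl
  · obtain ⟨η, hη⟩ := hproj X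
    exact ⟨⟨(X, η), hη⟩, rfl⟩

variable {ω : V →ₗ[R] V →ₗ[R] W}

theorem apply_eq_neg_apply_of_eq_graph (hiso : ∀ a ∈ L, ∀ b ∈ L, b.2 a.1 + a.2 b.1 = 0)
    (hL : L = ω.graph) (X Y : V) : ω X Y = -ω Y X := by
  subst hL
  exact eq_neg_of_add_eq_zero_right (hiso (X, ω X) rfl (Y, ω Y) rfl)

theorem injective_of_eq_graph (hV0 : ∀ a ∈ L, a.2 = 0 → a = 0) (hL : L = ω.graph) :
    Function.Injective ω := by
  subst hL
  refine (injective_iff_map_eq_zero ω).mpr fun X hX ↦ ?_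
  exact congrArg Prod.fst (hV0 (X, ω X) rfl hX)

end Submodule

theorem stmt8_general (k : ℕ) (V : Type*) [AddCommGroup V] [Module ℝ V]
    (L : Submodule ℝ (V × (V →ₗ[ℝ] (Fin k → ℝ))))
    (hiso : ∀ a ∈ L, ∀ b ∈ L, b.2 a.1 + a.2 b.1 = 0)
    (hV0 : ∀ a ∈ L, a.2 = 0 → a = 0)
    (hproj : ∀ X : V, ∃ η : V →ₗ[ℝ] (Fin k → ℝ), (X, η) ∈ L) :
    ∃! ω : V →ₗ[ℝ] V →ₗ[ℝ] (Fin k → ℝ),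
      (∀ X Y : V, ω X Y = - ω Y X) ∧ Function.Injective ⇑ω ∧
      (L : Set (V × (V →ₗ[ℝ] (Fin k → ℝ)))) = {a | a.2 = ω a.1} := by
  obtain ⟨ω, hL⟩ := Submodule.exists_eq_graph_of_isotropic hiso hproj
  refine ⟨ω, ⟨Submodule.apply_eq_neg_apply_of_eq_graph hiso hL,
    Submodule.injective_of_eq_graph hV0 hL, by rw [hL]; rfl⟩, ?_⟩
  rintro ω' ⟨-, -, hω'⟩
  have hω'L : L = ω'.graph := SetLike.coe_injective hω'
  exact LinearMap.graph_injective (hω'L.symm.trans hL)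

/-- If a linear subspace `L ⊆ A = V ⊕ Hom(V, ℝ^k)` satisfies `L ⊆ L^⊥`,
`L ∩ (V ⊕ 0) = {0}`, and the projection `A → V` maps `L` onto `V`, then there is a
unique nondegenerate `ℝ^k`-valued 2-form `ω` on `V` with `L = graph(ω^♭)`. -/
theorem stmt8 (k : ℕ) (hk : 0 < k) (V : Type*) [AddCommGroup V] [Module ℝ V]
    (L : Submodule ℝ (V × (V →ₗ[ℝ] (Fin k → ℝ))))
    (hiso : ∀ a ∈ L, ∀ b ∈ L, b.2 a.1 + a.2 b.1 = 0)
    (hV0 : ∀ a ∈ L, a.2 = 0 → a = 0)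
    (hproj : ∀ X : V, ∃ η : V →ₗ[ℝ] (Fin k → ℝ), (X, η) ∈ L) :
    ∃! ω : V →ₗ[ℝ] V →ₗ[ℝ] (Fin k → ℝ),
      (∀ X Y : V, ω X Y = - ω Y X) ∧ Function.Injective ⇑ω ∧
      (L : Set (V × (V →ₗ[ℝ] (Fin k → ℝ)))) = {a | a.2 = ω a.1} :=
  stmt8_general k V L hiso hV0 hproj
end

section
/- Let V be a real vector space and L ⊆ A := V ⊕ Hom(V, ℝ^k) a linear subspace with L ⊆ L^⊥ and L^⊥ ∩ (V ⊕ 0) = {0}. Then L ∩ (V ⊕ 0) = {0}; consequently, letting S ⊆ Hom(V, ℝ^k) be the image of L under the projection A → Hom(V, ℝ^k), there is a unique linear map P : S → V with L = {P(η) ⊕ η : η ∈ S}, and (S, P) is pointwise k-poly-Poisson data: η(P(η)) = 0 for all η ∈ S and S° = {0}. -/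
/-!
Since `L ⊆ L^⊥`, the hypothesis `L^⊥ ∩ (V ⊕ 0) = 0` forces `L ∩ (V ⊕ 0) = 0`, so the projection
`L → S` is a linear isomorphism and `P` is its inverse followed by the projection to `V`.
Pairing `P η ⊕ η` with itself gives `2 η(P η) = 0`, and a vector `X` killed by all of `S` makes
`X ⊕ 0` orthogonal to `L`, hence zero.
-/

namespace Submodule

section Graph

variable {R M N : Type*} [Ring R] [AddCommGroup M] [Module R M] [AddCommGroup N] [Module R N]
  {L : Submodule R (M × N)}

theorem fst_eq_of_mem_of_snd_eq (hL : ∀ a ∈ L, a.2 = 0 → a = 0) {x x' : M} {y : N}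
    (h : (x, y) ∈ L) (h' : (x', y) ∈ L) : x = x' :=
  sub_eq_zero.mp congr($(hL _ (L.sub_mem h h') (sub_self y)).1)

theorem existsUnique_linearMap_coe_eq_graph (hL : ∀ a ∈ L, a.2 = 0 → a = 0)
    (S : Submodule R N) (hS : ∀ y, y ∈ S ↔ ∃ x, (x, y) ∈ L) :
    ∃! P : S →ₗ[R] M, (L : Set (M × N)) = {a | ∃ y : S, a = (P y, (y : N))} := by
  set f : L →ₗ[R] N := LinearMap.snd R M N ∘ₗ L.subtype
  have hinj : Function.Injective f := LinearMap.ker_eq_bot.mp <| LinearMap.ker_eq_bot'.mpr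
    fun a ha => Subtype.ext (hL a a.2 ha)
  have hrange : LinearMap.range f = S := by
    ext y
    simp [f, hS]
  set e : L ≃ₗ[R] S := (LinearEquiv.ofInjective f hinj).trans (LinearEquiv.ofEq _ _ hrange)
  set P : S →ₗ[R] M := LinearMap.fst R M N ∘ₗ L.subtype ∘ₗ e.symm.toLinearMap
  have hP : ∀ y : S, ((e.symm y : L) : M × N) = (P y, (y : N)) := fun y =>
    Prod.ext rfl congr(($(e.apply_symm_apply y) : N))
  refine ⟨P, ?_, fun P' hP' => LinearMap.ext fun y => ?_⟩
  · ext a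
    refine ⟨fun ha => ⟨e ⟨a, ha⟩, ?_⟩, ?_⟩
    · rw [← hP, e.symm_apply_apply]
    · rintro ⟨y, rfl⟩
      rw [← hP]
      exact (e.symm y).2
  · have hy : (P' y, (y : N)) ∈ L := by
      rw [← SetLike.mem_coe, hP']
      exact ⟨y, rfl⟩
    exact fst_eq_of_mem_of_snd_eq hL hy (hP y ▸ (e.symm y).2)

end Graph

section Pairing

variable {R V W : Type*} [CommRing R] [AddCommGroup V] [Module R V] [AddCommGroup W]
  [Module R W] {L : Submodule R (V × (V →ₗ[R] W))}

theorem snd_apply_fst_eq_zero_of_isotropic [IsAddTorsionFree W]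
    (hiso : ∀ a ∈ L, ∀ b ∈ L, b.2 a.1 + a.2 b.1 = 0) {a : V × (V →ₗ[R] W)} (ha : a ∈ L) :
    a.2 a.1 = 0 :=
  two_nsmul_eq_zero.mp <| (two_nsmul _).trans (hiso a ha a ha)

theorem eq_zero_of_forall_snd_apply_eq_zero
    (hperp : ∀ a : V × (V →ₗ[R] W), (∀ b ∈ L, b.2 a.1 + a.2 b.1 = 0) → a.2 = 0 → a = 0)
    {X : V} (hX : ∀ b ∈ L, b.2 X = 0) : X = 0 :=
  congr($(hperp (X, 0) (fun b hb => by simp [hX b hb]) rfl).1)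

end Pairing

end Submodule

open Submodule in
theorem stmt10_general (k : ℕ) (V : Type*) [AddCommGroup V] [Module ℝ V]
    (L : Submodule ℝ (V × (V →ₗ[ℝ] (Fin k → ℝ))))
    (hiso : ∀ a ∈ L, ∀ b ∈ L, b.2 a.1 + a.2 b.1 = 0)
    (hperp : ∀ a : V × (V →ₗ[ℝ] (Fin k → ℝ)),
      (∀ b ∈ L, b.2 a.1 + a.2 b.1 = 0) → a.2 = 0 → a = 0)
    (S : Submodule ℝ (V →ₗ[ℝ] (Fin k → ℝ)))
    (hS : ∀ η : V →ₗ[ℝ] (Fin k → ℝ), η ∈ S ↔ ∃ X : V, (X, η) ∈ L) :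
    (∀ a ∈ L, a.2 = 0 → a = 0) ∧
    (∃! P : S →ₗ[ℝ] V,
      (L : Set (V × (V →ₗ[ℝ] (Fin k → ℝ))))
        = {a | ∃ η : S, a = (P η, (η : V →ₗ[ℝ] (Fin k → ℝ)))}) ∧
    (∀ P : S →ₗ[ℝ] V,
      ((L : Set (V × (V →ₗ[ℝ] (Fin k → ℝ))))
        = {a | ∃ η : S, a = (P η, (η : V →ₗ[ℝ] (Fin k → ℝ)))}) →
      ∀ η : S, (η : V →ₗ[ℝ] (Fin k → ℝ)) (P η) = 0) ∧
    (∀ X : V, (∀ η ∈ S, η X = 0) → X = 0) := by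
  have hL : ∀ a ∈ L, a.2 = 0 → a = 0 := fun a ha => hperp a fun b hb => hiso a ha b hb
  refine ⟨hL, existsUnique_linearMap_coe_eq_graph hL S hS, fun P hP η => ?_,
    fun X hX => eq_zero_of_forall_snd_apply_eq_zero hperp
      fun b hb => hX b.2 ((hS b.2).mpr ⟨b.1, hb⟩)⟩
  have hη : (P η, (η : V →ₗ[ℝ] (Fin k → ℝ))) ∈ L := by
    rw [← SetLike.mem_coe, hP]
    exact ⟨η, rfl⟩
  exact snd_apply_fst_eq_zero_of_isotropic hiso hη

/-- If a linear subspace `L ⊆ A = V ⊕ Hom(V, ℝ^k)` satisfies `L ⊆ L^⊥`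
and `L^⊥ ∩ (V ⊕ 0) = {0}`, then `L ∩ (V ⊕ 0) = {0}`; letting `S` be the image of `L`
under the projection to `Hom(V, ℝ^k)`, there is a unique linear `P : S → V` with
`L = {P(η) ⊕ η : η ∈ S}`, and `(S, P)` is pointwise `k`-poly-Poisson data:
`η(P(η)) = 0` for all `η ∈ S` and `S° = {0}`. -/
theorem stmt10 (k : ℕ) (hk : 0 < k) (V : Type*) [AddCommGroup V] [Module ℝ V]
    (L : Submodule ℝ (V × (V →ₗ[ℝ] (Fin k → ℝ))))
    (hiso : ∀ a ∈ L, ∀ b ∈ L, b.2 a.1 + a.2 b.1 = 0)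
    (hperp : ∀ a : V × (V →ₗ[ℝ] (Fin k → ℝ)),
      (∀ b ∈ L, b.2 a.1 + a.2 b.1 = 0) → a.2 = 0 → a = 0)
    (S : Submodule ℝ (V →ₗ[ℝ] (Fin k → ℝ)))
    (hS : ∀ η : V →ₗ[ℝ] (Fin k → ℝ), η ∈ S ↔ ∃ X : V, (X, η) ∈ L) :
    (∀ a ∈ L, a.2 = 0 → a = 0) ∧
    (∃! P : S →ₗ[ℝ] V,
      (L : Set (V × (V →ₗ[ℝ] (Fin k → ℝ))))
        = {a | ∃ η : S, a = (P η, (η : V →ₗ[ℝ] (Fin k → ℝ)))}) ∧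
    (∀ P : S →ₗ[ℝ] V,
      ((L : Set (V × (V →ₗ[ℝ] (Fin k → ℝ))))
        = {a | ∃ η : S, a = (P η, (η : V →ₗ[ℝ] (Fin k → ℝ)))}) →
      ∀ η : S, (η : V →ₗ[ℝ] (Fin k → ℝ)) (P η) = 0) ∧
    (∀ X : V, (∀ η ∈ S, η X = 0) → X = 0) :=
  stmt10_general k V L hiso hperp S hS
end

section
/- Let V be a real vector space and L ⊆ A := V ⊕ Hom(V, ℝ^k) a linear subspace. Then the following are equivalent: (b) L ⊆ L^⊥ and L^⊥ ∩ (V ⊕ 0) = {0}; (c) L = L^⊥ ∩ (L + (V ⊕ 0)) and L ∩ (V ⊕ 0) = {0}. (This is the linear-algebraic equivalence of conditions (b) and (c) in Proposition 3.11 characterizing poly-Poisson structures among subbundles of TM ⊕ (⊕_(k)T*M).) -/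
/-!
`L^⊥` is the orthogonal submodule of `L` for the pairing, so only the modular law in the
lattice of submodules is needed, with `P = L^⊥` and `W = V ⊕ 0`.
If `L ≤ P` then `P ⊓ (L ⊔ W) = L ⊔ (P ⊓ W)`, which is `L` as soon as `P ⊓ W = ⊥`, and then
`L ⊓ W ≤ P ⊓ W = ⊥`. Conversely `L = P ⊓ (L ⊔ W)` gives `L ≤ P` and `P ⊓ W ≤ L ⊓ W = ⊥`.
-/

theorem le_and_inf_eq_bot_iff_eq_inf_sup_and_inf_eq_bot {α : Type*} [Lattice α] [OrderBot α]
    [IsModularLattice α] {L P W : α} :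
    (L ≤ P ∧ P ⊓ W = ⊥) ↔ (L = P ⊓ (L ⊔ W) ∧ L ⊓ W = ⊥) := by
  constructor
  · rintro ⟨hLP, hPW⟩
    refine ⟨?_, eq_bot_mono (inf_le_inf_right W hLP) hPW⟩
    rw [inf_comm, sup_inf_assoc_of_le W hLP, inf_comm W, hPW, sup_bot_eq]
  · rintro ⟨hL, hLW⟩
    have hLP : L ≤ P := hL ▸ inf_le_left
    have hPWL : P ⊓ W ≤ L := hL ▸ inf_le_inf_left P le_sup_right
    exact ⟨hLP, eq_bot_mono (le_inf hPWL inf_le_right) hLW⟩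

section DualPairing

variable (R V E : Type*) [CommRing R] [AddCommGroup V] [Module R V] [AddCommGroup E] [Module R E]

def dualPairing : (V × (V →ₗ[R] E)) →ₗ[R] (V × (V →ₗ[R] E)) →ₗ[R] E :=
  LinearMap.mk₂ R (fun b a => b.2 a.1 + a.2 b.1)
    (fun b b' a => by simp only [Prod.fst_add, Prod.snd_add, map_add, LinearMap.add_apply]; abel)
    (fun c b a => by simp)
    (fun b a a' => by simp only [Prod.fst_add, Prod.snd_add, map_add, LinearMap.add_apply]; abel)
    (fun c b a => by simp)

variable {R V E}

theorem coe_orthogonalBilin_dualPairing (L : Submodule R (V × (V →ₗ[R] E))) :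
    (L.orthogonalBilin (dualPairing R V E) : Set (V × (V →ₗ[R] E))) =
      {a | ∀ b ∈ L, b.2 a.1 + a.2 b.1 = 0} :=
  rfl

theorem coe_ker_snd :
    (LinearMap.ker (LinearMap.snd R V (V →ₗ[R] E)) : Set (V × (V →ₗ[R] E))) = {a | a.2 = 0} :=
  rfl

theorem coe_sup_ker_snd (L : Submodule R (V × (V →ₗ[R] E))) :
    ((L ⊔ LinearMap.ker (LinearMap.snd R V (V →ₗ[R] E)) : Submodule R _) :
        Set (V × (V →ₗ[R] E))) = {a | ∃ b ∈ L, ∃ X : V, a = b + (X, 0)} := by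
  ext a
  simp only [SetLike.mem_coe, Submodule.mem_sup, LinearMap.mem_ker, LinearMap.snd_apply,
    Set.mem_ofPred_eq]
  constructor
  · rintro ⟨b, hb, ⟨X, f⟩, rfl, rfl⟩
    exact ⟨b, hb, X, rfl⟩
  · rintro ⟨b, hb, X, rfl⟩
    exact ⟨b, hb, (X, 0), rfl, rfl⟩

end DualPairing

theorem stmt11_general (k : ℕ) (V : Type*) [AddCommGroup V] [Module ℝ V]
    (L : Submodule ℝ (V × (V →ₗ[ℝ] (Fin k → ℝ))))
    (Lperp : Set (V × (V →ₗ[ℝ] (Fin k → ℝ))))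
    (hperp : Lperp = {a | ∀ b ∈ L, b.2 a.1 + a.2 b.1 = 0}) :
    (((L : Set (V × (V →ₗ[ℝ] (Fin k → ℝ)))) ⊆ Lperp) ∧
        Lperp ∩ {a | a.2 = 0} = {0}) ↔
    (((L : Set (V × (V →ₗ[ℝ] (Fin k → ℝ))))
        = Lperp ∩ {a | ∃ b ∈ L, ∃ X : V, a = b + (X, 0)}) ∧
      (L : Set (V × (V →ₗ[ℝ] (Fin k → ℝ)))) ∩ {a | a.2 = 0} = {0}) := by
  rw [hperp, ← coe_orthogonalBilin_dualPairing, ← coe_ker_snd, ← coe_sup_ker_snd,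
    ← Submodule.bot_coe (R := ℝ)]
  simp only [← Submodule.coe_inf, SetLike.coe_subset_coe, SetLike.coe_set_eq]
  exact le_and_inf_eq_bot_iff_eq_inf_sup_and_inf_eq_bot

/-- For a linear subspace `L ⊆ A = V ⊕ Hom(V, ℝ^k)`, condition
(b): `L ⊆ L^⊥` and `L^⊥ ∩ (V ⊕ 0) = {0}`, is equivalent to condition
(c): `L = L^⊥ ∩ (L + (V ⊕ 0))` and `L ∩ (V ⊕ 0) = {0}`
(the equivalence of (b) and (c) in Proposition 3.11). -/
theorem stmt11 (k : ℕ) (hk : 0 < k) (V : Type*) [AddCommGroup V] [Module ℝ V]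
    (L : Submodule ℝ (V × (V →ₗ[ℝ] (Fin k → ℝ))))
    (Lperp : Set (V × (V →ₗ[ℝ] (Fin k → ℝ))))
    (hperp : Lperp = {a | ∀ b ∈ L, b.2 a.1 + a.2 b.1 = 0}) :
    (((L : Set (V × (V →ₗ[ℝ] (Fin k → ℝ)))) ⊆ Lperp) ∧
        Lperp ∩ {a | a.2 = 0} = {0}) ↔
    (((L : Set (V × (V →ₗ[ℝ] (Fin k → ℝ))))
        = Lperp ∩ {a | ∃ b ∈ L, ∃ X : V, a = b + (X, 0)}) ∧
      (L : Set (V × (V →ₗ[ℝ] (Fin k → ℝ)))) ∩ {a | a.2 = 0} = {0}) :=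
  stmt11_general k V L Lperp hperp
end

section
/- Let V be a finite-dimensional real vector space and consider A := V ⊕ V* with the symmetric pairing ⟨X ⊕ η, Y ⊕ γ⟩ := γ(X) + η(Y). Then a linear subspace L ⊆ A satisfies L = L^⊥ ∩ (L + (V ⊕ 0)) if and only if L = L^⊥. (This is the claim of Remark 3.12 that for k = 1 the relaxed lagrangian condition (3.11) is equivalent to the lagrangian condition (3.9), so that the objects of Proposition 3.11 are usual Dirac structures when k = 1.) -/
/-!
If `W` is coisotropic (`W^⊥ ⊆ W`), which `V ⊕ 0` is for the pairing on `V ⊕ V*`, then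
`L = L^⊥ ∩ (L + W)` forces `(L + W)^⊥ = L^⊥ ∩ W^⊥ ⊆ L^⊥ ∩ (L + W) = L`. Taking orthogonals in finite
dimension gives `L^⊥ ⊆ L + W`, hence `L^⊥ = L^⊥ ∩ (L + W) = L`.
-/

open LinearMap (BilinForm)
open Module

namespace LinearMap.BilinForm

variable {K V : Type*} [Field K] [AddCommGroup V] [Module K V] [FiniteDimensional K V]
  {B : BilinForm K V}

theorem eq_orthogonal_iff_eq_orthogonal_inf_sup (hB : B.Nondegenerate) (hB₀ : B.IsRefl)
    {W : Submodule K V} (hW : B.orthogonal W ≤ W) (L : Submodule K V) :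
    L = B.orthogonal L ⊓ (L ⊔ W) ↔ L = B.orthogonal L := by
  refine ⟨fun h ↦ ?_, fun h ↦ ?_⟩
  · have orthogonal_sup_le : B.orthogonal (L ⊔ W) ≤ L :=
      calc B.orthogonal (L ⊔ W)
          ≤ B.orthogonal L ⊓ W :=
            le_inf (orthogonal_le le_sup_left) ((orthogonal_le le_sup_right).trans hW)
        _ ≤ B.orthogonal L ⊓ (L ⊔ W) := inf_le_inf_left _ le_sup_right
        _ = L := h.symm
    have orthogonal_le_sup : B.orthogonal L ≤ L ⊔ W := by
      simpa only [orthogonal_orthogonal hB hB₀] using orthogonal_le (B := B) orthogonal_sup_le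
    exact le_antisymm (h.le.trans inf_le_left) ((le_inf le_rfl orthogonal_le_sup).trans h.ge)
  · conv_lhs => rw [h]
    rw [← h, inf_eq_left.mpr le_sup_left]

end LinearMap.BilinForm

section DualPairing

variable {K : Type*} [Field K]

theorem Submodule.coe_sup_prod_top_bot {M N : Type*} [AddCommGroup M] [Module K M]
    [AddCommGroup N] [Module K N] (L : Submodule K (M × N)) :
    ((L ⊔ (⊤ : Submodule K M).prod ⊥ : Submodule K (M × N)) : Set (M × N)) =
      {a | ∃ b ∈ L, ∃ X : M, a = b + (X, 0)} := by
  ext a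
  simp only [SetLike.mem_coe, Submodule.mem_sup, Submodule.mem_prod, Set.mem_ofPred_eq]
  constructor
  · rintro ⟨b, hb, w, ⟨-, hw⟩, rfl⟩
    exact ⟨b, hb, w.1, by rw [Submodule.mem_bot] at hw; ext <;> simp [hw]⟩
  · rintro ⟨b, hb, X, rfl⟩
    exact ⟨b, hb, (X, 0), by simp, rfl⟩

variable (K) (V : Type*) [AddCommGroup V] [Module K V]

noncomputable def prodDualPairing : BilinForm K (V × Dual K V) :=
  LinearMap.BilinForm.congr (LinearEquiv.prodComm K (Dual K V) V) (LinearMap.dualProd K V)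

variable {K V}

theorem prodDualPairing_apply (x y : V × Dual K V) :
    prodDualPairing K V x y = y.2 x.1 + x.2 y.1 := by
  simp [prodDualPairing]

theorem isRefl_prodDualPairing : (prodDualPairing K V).IsRefl :=
  fun x y h ↦ by rw [prodDualPairing_apply] at h ⊢; rwa [add_comm]

theorem nondegenerate_prodDualPairing : (prodDualPairing K V).Nondegenerate := by
  refine .congr _ ((LinearMap.isSymm_dualProd K V).isRefl.nondegenerate_iff_separatingLeft.mpr ?_)
  exact (LinearMap.separatingLeft_dualProd K V).mpr (Free.chooseBasis K V).eval_injective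

theorem orthogonal_prod_top_bot_le :
    (prodDualPairing K V).orthogonal ((⊤ : Submodule K V).prod ⊥) ≤
      (⊤ : Submodule K V).prod ⊥ := by
  intro a ha
  have : a.2 = 0 := LinearMap.ext fun X ↦ by
    simpa [prodDualPairing_apply] using ha (X, 0) (by simp [Submodule.mem_prod])
  simp [Submodule.mem_prod, this]

end DualPairing

/-- For a finite-dimensional real vector space `V` and `A = V ⊕ V*` with the
symmetric pairing `⟨X ⊕ η, Y ⊕ γ⟩ = γ(X) + η(Y)`, a linear subspace `L ⊆ A` satisfies
`L = L^⊥ ∩ (L + (V ⊕ 0))` if and only if `L = L^⊥` (Remark 3.12: for `k = 1` the relaxed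
lagrangian condition is equivalent to the lagrangian condition). -/
theorem stmt12 (V : Type*) [AddCommGroup V] [Module ℝ V] [FiniteDimensional ℝ V]
    (L : Submodule ℝ (V × Module.Dual ℝ V))
    (Lperp : Set (V × Module.Dual ℝ V))
    (hperp : Lperp = {a | ∀ b ∈ L, b.2 a.1 + a.2 b.1 = 0}) :
    ((L : Set (V × Module.Dual ℝ V))
        = Lperp ∩ {a | ∃ b ∈ L, ∃ X : V, a = b + (X, 0)}) ↔
    (L : Set (V × Module.Dual ℝ V)) = Lperp := by
  have hLperp : Lperp = (prodDualPairing ℝ V).orthogonal L := by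
    ext a
    simp [hperp, prodDualPairing_apply, add_comm]
  rw [hLperp, ← Submodule.coe_sup_prod_top_bot, ← Submodule.coe_inf, SetLike.coe_set_eq,
    SetLike.coe_set_eq]
  exact LinearMap.BilinForm.eq_orthogonal_iff_eq_orthogonal_inf_sup
    (nondegenerate_prodDualPairing (K := ℝ) (V := V)) isRefl_prodDualPairing orthogonal_prod_top_bot_le L
end

section
/- Let g be a finite-dimensional real vector space with dim g ≥ 1, let U := g* × g*, and for u ∈ g let η_u ∈ Hom(U, ℝ²) be defined by η_u(ζ₁, ζ₂) := (ζ₁(u), ζ₂(u)). Then the subspace L := {0 ⊕ η_u : u ∈ g} of A := U ⊕ Hom(U, ℝ²) satisfies L ⊆ L^⊥ but L ≠ L^⊥ (L is isotropic but properly contained in its orthogonal). (This is the counterexample showing that the graph of the direct-sum poly-Poisson structure on g*_(2) at the point ζ = (0,0) is not lagrangian, so poly-Poisson structures are in general not AV-Dirac structures.) -/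
/-!
Every pair `0 ⊕ φ` is orthogonal to `L`, since the pairing only evaluates the `Hom(U, ℝ²)`-parts
on first components, which vanish on `L`. So `L^⊥ ⊇ 0 ⊕ Hom(U, ℝ²)`, and it suffices to find a
`φ` that is not of the form `η_u`: for `u₀ ≠ 0`, the map `η_{u₀}` with its two arguments swapped
does the job, as a functional `f` with `f u₀ ≠ 0` shows on `(f, 0)`.
-/

open Module

namespace Module.Dual

variable {R M : Type*} [CommSemiring R] [AddCommMonoid M] [Module R M]

/-- The paper's `η_u`. -/
def pairEval (u : M) : (Dual R M × Dual R M) →ₗ[R] (Fin 2 → R) :=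
  LinearMap.pi ![eval R M u ∘ₗ LinearMap.fst R _ _, eval R M u ∘ₗ LinearMap.snd R _ _]

@[simp]
theorem pairEval_apply (u : M) (ζ : Dual R M × Dual R M) : pairEval u ζ = ![ζ.1 u, ζ.2 u] := by
  ext i
  fin_cases i <;> rfl

theorem pairEval_ne_pairEval_comp_prodComm [Projective R M] {u₀ : M} (hu₀ : u₀ ≠ 0) (u : M) :
    pairEval u ≠ pairEval u₀ ∘ₗ (LinearEquiv.prodComm R (Dual R M) (Dual R M)).toLinearMap := by
  obtain ⟨f, hf⟩ := Projective.exists_dual_ne_zero R hu₀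
  intro h
  exact hf (by simpa using (congr_fun (LinearMap.congr_fun h (f, 0)) 1).symm)

end Module.Dual

open Module.Dual in
theorem stmt13_general (g : Type*) [AddCommGroup g] [Module ℝ g]
    (hdim : 1 ≤ Module.finrank ℝ g)
    (L : Set ((Module.Dual ℝ g × Module.Dual ℝ g) ×
      ((Module.Dual ℝ g × Module.Dual ℝ g) →ₗ[ℝ] (Fin 2 → ℝ))))
    (hL : L = {a | a.1 = 0 ∧ ∃ u : g,
      ∀ ζ : Module.Dual ℝ g × Module.Dual ℝ g, a.2 ζ = ![ζ.1 u, ζ.2 u]}) :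
    (∀ a ∈ L, ∀ b ∈ L, b.2 a.1 + a.2 b.1 = 0) ∧
    L ≠ {a | ∀ b ∈ L, b.2 a.1 + a.2 b.1 = 0} := by
  have hfst : ∀ a ∈ L, a.1 = 0 := fun a ha ↦ (hL ▸ ha).1
  refine ⟨fun a ha b hb ↦ by simp [hfst a ha, hfst b hb], fun hEq ↦ ?_⟩
  have : Nontrivial g := Module.nontrivial_of_finrank_pos (R := ℝ) hdim
  obtain ⟨u₀, hu₀⟩ := exists_ne (0 : g)
  let φ := pairEval u₀ ∘ₗ (LinearEquiv.prodComm ℝ (Dual ℝ g) (Dual ℝ g)).toLinearMap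
  have hφ : (0, φ) ∈ {a | ∀ b ∈ L, b.2 a.1 + a.2 b.1 = 0} := fun b hb ↦ by simp [hfst b hb]
  rw [← hEq, hL] at hφ
  obtain ⟨-, u, hu⟩ := hφ
  exact pairEval_ne_pairEval_comp_prodComm hu₀ u
    (LinearMap.ext fun ζ ↦ (pairEval_apply u ζ).trans (hu ζ).symm)

/-- For a finite-dimensional real vector space `g` with `dim g ≥ 1`,
`U := g* × g*`, and `η_u(ζ₁, ζ₂) := (ζ₁(u), ζ₂(u))`, the subspace
`L := {0 ⊕ η_u : u ∈ g}` of `A := U ⊕ Hom(U, ℝ²)` is isotropic but properly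
contained in its orthogonal: `L ⊆ L^⊥` but `L ≠ L^⊥`. -/
theorem stmt13 (g : Type*) [AddCommGroup g] [Module ℝ g] [FiniteDimensional ℝ g]
    (hdim : 1 ≤ Module.finrank ℝ g)
    (L : Set ((Module.Dual ℝ g × Module.Dual ℝ g) ×
      ((Module.Dual ℝ g × Module.Dual ℝ g) →ₗ[ℝ] (Fin 2 → ℝ))))
    (hL : L = {a | a.1 = 0 ∧ ∃ u : g,
      ∀ ζ : Module.Dual ℝ g × Module.Dual ℝ g, a.2 ζ = ![ζ.1 u, ζ.2 u]}) :
    (∀ a ∈ L, ∀ b ∈ L, b.2 a.1 + a.2 b.1 = 0) ∧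
    L ≠ {a | ∀ b ∈ L, b.2 a.1 + a.2 b.1 = 0} :=
  stmt13_general g hdim L hL
end

section
/- Let ω be a nondegenerate ℝ^k-valued 2-form on a real vector space V and let W ⊆ V be a subspace. Then (W^ω)^ω = (Im(ω^♭) ∩ A_W)°, where A_W := {η ∈ Hom(V, ℝ^k) : η(X) = 0 for all X ∈ W} and, for a subset T ⊆ Hom(V, ℝ^k), T° := {Z ∈ V : η(Z) = 0 for all η ∈ T}. (This identity (ker dJ)^ω = (S ∩ ⊕_kAnn(V))° is the key linear step in the poly-symplectic reduction results, Propositions 4.3 and 4.4.) -/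
/- By skew-symmetry, `ω Y` annihilates `W` exactly when `Y ∈ W^ω`,
so `Im(ω^♭) ∩ A_W = ω^♭(W^ω)`, and the annihilator of that image is `(W^ω)^ω` by definition. -/

theorem LinearMap.range_inter_annihilator_eq_image_orthogonal {R V M : Type*} [CommRing R]
    [AddCommGroup V] [Module R V] [AddCommGroup M] [Module R M] (ω : V →ₗ[R] V →ₗ[R] M)
    (halt : ∀ X Y : V, ω X Y = - ω Y X) (W : Submodule R V) :
    Set.range ω ∩ {η : V →ₗ[R] M | ∀ X ∈ W, η X = 0} = ω '' {Y : V | ∀ X ∈ W, ω X Y = 0} := by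
  have vanishes_iff (Y : V) : (∀ X ∈ W, ω Y X = 0) ↔ ∀ X ∈ W, ω X Y = 0 :=
    forall₂_congr fun X _ => by rw [halt Y X, neg_eq_zero]
  ext η
  constructor
  · rintro ⟨⟨Y, rfl⟩, hY⟩
    exact ⟨Y, (vanishes_iff Y).1 hY, rfl⟩
  · rintro ⟨Y, hY, rfl⟩
    exact ⟨⟨Y, rfl⟩, (vanishes_iff Y).2 hY⟩

theorem stmt14_general (k : ℕ) (V : Type*) [AddCommGroup V] [Module ℝ V]
    (ω : V →ₗ[ℝ] V →ₗ[ℝ] (Fin k → ℝ))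
    (halt : ∀ X Y : V, ω X Y = - ω Y X)
    (W : Submodule ℝ V) :
    {Z : V | ∀ Y ∈ {Y : V | ∀ X ∈ W, ω X Y = 0}, ω Y Z = 0}
      = {Z : V | ∀ η ∈ (Set.range ⇑ω) ∩ {η : V →ₗ[ℝ] (Fin k → ℝ) | ∀ X ∈ W, η X = 0},
          η Z = 0} := by
  rw [ω.range_inter_annihilator_eq_image_orthogonal halt W]
  ext Z
  simp only [Set.mem_ofPred_eq, Set.forall_mem_image]

/-- For a nondegenerate `ℝ^k`-valued 2-form `ω` on `V` and a subspace
`W ⊆ V`, one has `(W^ω)^ω = (Im(ω^♭) ∩ A_W)°`, where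
`W^ω = {Y : ω(X,Y) = 0 ∀ X ∈ W}`, `A_W = {η : η(X) = 0 ∀ X ∈ W}` and
`T° = {Z : η(Z) = 0 ∀ η ∈ T}`. -/
theorem stmt14 (k : ℕ) (hk : 0 < k) (V : Type*) [AddCommGroup V] [Module ℝ V]
    (ω : V →ₗ[ℝ] V →ₗ[ℝ] (Fin k → ℝ))
    (halt : ∀ X Y : V, ω X Y = - ω Y X)
    (hnd : Function.Injective ⇑ω)
    (W : Submodule ℝ V) :
    {Z : V | ∀ Y ∈ {Y : V | ∀ X ∈ W, ω X Y = 0}, ω Y Z = 0}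
      = {Z : V | ∀ η ∈ (Set.range ⇑ω) ∩ {η : V →ₗ[ℝ] (Fin k → ℝ) | ∀ X ∈ W, η X = 0},
          η Z = 0} :=
  stmt14_general k V ω halt W
end

section
/- Let ω be a nondegenerate ℝ^k-valued 2-form on a real vector space V and let K ⊆ V be a subspace. Then ω(Z, Y) = 0 for all Z ∈ K ∩ K^ω and Y ∈ K^ω, so ω induces a well-defined alternating ℝ^k-valued 2-form ω̄ on the quotient K^ω / (K ∩ K^ω); and ω̄ is nondegenerate if and only if (K^ω)^ω ∩ K^ω ⊆ K. (This is the pointwise statement underlying Proposition 4.3: the reduced form on J^{-1}(ζ)/G_ζ is poly-symplectic if and only if (S ∩ ⊕_kAnn(V))° ∩ TJ^{-1}(ζ) ⊆ V ∩ TJ^{-1}(ζ).) -/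
/-- For an `ℝ^k`-valued bilinear form `ω` on `V` and a set `K ⊆ V`, the `ω`-orthogonal
`K^ω := {Y : ω(X, Y) = 0 for all X ∈ K}`, a linear subspace of `V`. -/
def omegaPolar {k : ℕ} {V : Type*} [AddCommGroup V] [Module ℝ V]
    (ω : V →ₗ[ℝ] V →ₗ[ℝ] (Fin k → ℝ)) (K : Set V) : Submodule ℝ V where
  carrier := {Y | ∀ X ∈ K, ω X Y = 0}
  add_mem' := by
    intro a b ha hb X hX
    simp [map_add, ha X hX, hb X hX]
  zero_mem' := by
    intro X hX
    simp
  smul_mem' := by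
    intro c a ha X hX
    simp [map_smul, ha X hX]

/-!
The restriction of `ω` to `W := K^ω` has radical `W ∩ W^ω` (by skew-symmetry), and it vanishes
on `K ∩ W` on either side, so it descends to `W / (K ∩ W)`. A form descended to a quotient
is nondegenerate exactly when the radical upstairs lies in the subspace divided out, which
here reads `W ∩ W^ω ⊆ K`.
-/

namespace LinearMap

section liftQ₂

variable {R M N P : Type*} [CommRing R] [AddCommGroup M] [Module R M] [AddCommGroup N]
  [Module R N] [AddCommGroup P] [Module R P] {M' : Submodule R M} {N' : Submodule R N}
  {f : M →ₗ[R] N →ₗ[R] P} (hM' : M' ≤ ker f) (hN' : N' ≤ ker f.flip)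

theorem eq_liftQ₂ {g : M ⧸ M' →ₗ[R] N ⧸ N' →ₗ[R] P}
    (hg : ∀ m n, g (Submodule.Quotient.mk m) (Submodule.Quotient.mk n) = f m n) :
    g = f.liftQ₂ M' N' hM' hN' := by
  ext m n
  exact hg m n

theorem injective_liftQ₂_iff : Function.Injective (f.liftQ₂ M' N' hM' hN') ↔ ker f ≤ M' := by
  have hker : ∀ m, f.liftQ₂ M' N' hM' hN' (Submodule.Quotient.mk m) = 0 ↔ f m = 0 := fun m ↦ by
    simp only [LinearMap.ext_iff, Submodule.Quotient.forall, liftQ₂_mk, zero_apply]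
  rw [injective_iff_map_eq_zero, Submodule.Quotient.forall]
  simp only [hker, Submodule.Quotient.mk_eq_zero]
  rfl

end liftQ₂

theorem liftQ₂_skew {R M P : Type*} [CommRing R] [AddCommGroup M] [Module R M] [AddCommGroup P]
    [Module R P] {N : Submodule R M} {f : M →ₗ[R] M →ₗ[R] P} (hskew : ∀ x y, f x y = -f y x)
    (hN : N ≤ ker f) (hN' : N ≤ ker f.flip) (a b : M ⧸ N) :
    f.liftQ₂ N N hN hN' a b = -f.liftQ₂ N N hN hN' b a := by
  induction a using Submodule.Quotient.induction_on
  induction b using Submodule.Quotient.induction_on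
  exact hskew _ _

end LinearMap

open LinearMap

section omegaPolar

variable {k : ℕ} {V : Type*} [AddCommGroup V] [Module ℝ V] {ω : V →ₗ[ℝ] V →ₗ[ℝ] (Fin k → ℝ)}

theorem mem_omegaPolar {S : Set V} {Y : V} : Y ∈ omegaPolar ω S ↔ ∀ X ∈ S, ω X Y = 0 :=
  Iff.rfl

theorem apply_eq_zero_of_mem_omegaPolar (hskew : ∀ X Y, ω X Y = -ω Y X) {S : Set V} {X Y : V}
    (hY : Y ∈ omegaPolar ω S) (hX : X ∈ S) : ω Y X = 0 := by
  rw [hskew, hY X hX, neg_zero]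

theorem ker_compl₁₂_subtype (hskew : ∀ X Y, ω X Y = -ω Y X) (W : Submodule ℝ V) :
    ker (ω.compl₁₂ W.subtype W.subtype) = (omegaPolar ω W).comap W.subtype := by
  ext Z
  simp only [mem_ker, Submodule.mem_comap, Submodule.subtype_apply, mem_omegaPolar,
    LinearMap.ext_iff, compl₁₂_apply, LinearMap.zero_apply, Subtype.forall, SetLike.mem_coe]
  exact forall₂_congr fun Y _ ↦ by rw [hskew, neg_eq_zero]

variable (K : Submodule ℝ V)

theorem comap_subtype_le_ker_compl₁₂ :
    K.comap (omegaPolar ω K).subtype ≤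
      ker (ω.compl₁₂ (omegaPolar ω K).subtype (omegaPolar ω K).subtype) :=
  fun Z hZ ↦ LinearMap.ext fun Y ↦ Y.2 Z hZ

theorem comap_subtype_le_ker_flip_compl₁₂ (hskew : ∀ X Y, ω X Y = -ω Y X) :
    K.comap (omegaPolar ω K).subtype ≤
      ker (ω.compl₁₂ (omegaPolar ω K).subtype (omegaPolar ω K).subtype).flip :=
  fun _ hZ ↦ LinearMap.ext fun Y ↦ apply_eq_zero_of_mem_omegaPolar hskew Y.2 hZ

end omegaPolar

theorem stmt15_general (k : ℕ) (V : Type*) [AddCommGroup V] [Module ℝ V]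
    (ω : V →ₗ[ℝ] V →ₗ[ℝ] (Fin k → ℝ))
    (halt : ∀ X Y : V, ω X Y = - ω Y X)
    (K : Submodule ℝ V) :
    (∀ Z : V, Z ∈ K → Z ∈ omegaPolar ω (K : Set V) →
      ∀ Y ∈ omegaPolar ω (K : Set V), ω Z Y = 0) ∧
    (∃! ωbar :
        ((omegaPolar ω (K : Set V)) ⧸ (K.comap (omegaPolar ω (K : Set V)).subtype)) →ₗ[ℝ]
        ((omegaPolar ω (K : Set V)) ⧸ (K.comap (omegaPolar ω (K : Set V)).subtype)) →ₗ[ℝ]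
        (Fin k → ℝ),
      ∀ Y Z : omegaPolar ω (K : Set V),
        ωbar (Submodule.Quotient.mk Y) (Submodule.Quotient.mk Z) = ω (Y : V) (Z : V)) ∧
    (∀ ωbar :
        ((omegaPolar ω (K : Set V)) ⧸ (K.comap (omegaPolar ω (K : Set V)).subtype)) →ₗ[ℝ]
        ((omegaPolar ω (K : Set V)) ⧸ (K.comap (omegaPolar ω (K : Set V)).subtype)) →ₗ[ℝ]
        (Fin k → ℝ),
      (∀ Y Z : omegaPolar ω (K : Set V),
        ωbar (Submodule.Quotient.mk Y) (Submodule.Quotient.mk Z) = ω (Y : V) (Z : V)) →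
      (∀ a b, ωbar a b = - ωbar b a) ∧
      (Function.Injective ⇑ωbar ↔
        ∀ Z : V, Z ∈ omegaPolar ω ((omegaPolar ω (K : Set V) : Submodule ℝ V) : Set V) →
          Z ∈ omegaPolar ω (K : Set V) → Z ∈ K)) := by
  have hN := comap_subtype_le_ker_compl₁₂ (ω := ω) K
  have hN' := comap_subtype_le_ker_flip_compl₁₂ K halt
  refine ⟨fun Z hZ _ Y hY ↦ hY Z hZ,
    ⟨_, liftQ₂_mk hN hN', fun g hg ↦ eq_liftQ₂ hN hN' hg⟩, fun g hg ↦ ?_⟩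
  obtain rfl := eq_liftQ₂ hN hN' hg
  refine ⟨liftQ₂_skew (fun Y Z : omegaPolar ω K ↦ halt Y Z) hN hN', ?_⟩
  rw [injective_liftQ₂_iff, ker_compl₁₂_subtype halt]
  exact ⟨fun h Z hZ hZW ↦ h (show (⟨Z, hZW⟩ : omegaPolar ω K) ∈ _ from hZ),
    fun h Z hZ ↦ h Z hZ Z.2⟩

/-- For a nondegenerate `ℝ^k`-valued 2-form `ω` on `V` and a subspace
`K ⊆ V`: `ω(Z, Y) = 0` for `Z ∈ K ∩ K^ω` and `Y ∈ K^ω`; there is a unique induced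
`ℝ^k`-valued bilinear form `ω̄` on the quotient `K^ω / (K ∩ K^ω)`; it is alternating,
and it is nondegenerate iff `(K^ω)^ω ∩ K^ω ⊆ K`. -/
theorem stmt15 (k : ℕ) (hk : 0 < k) (V : Type*) [AddCommGroup V] [Module ℝ V]
    (ω : V →ₗ[ℝ] V →ₗ[ℝ] (Fin k → ℝ))
    (halt : ∀ X Y : V, ω X Y = - ω Y X)
    (hnd : Function.Injective ⇑ω)
    (K : Submodule ℝ V) :
    (∀ Z : V, Z ∈ K → Z ∈ omegaPolar ω (K : Set V) →
      ∀ Y ∈ omegaPolar ω (K : Set V), ω Z Y = 0) ∧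
    (∃! ωbar :
        ((omegaPolar ω (K : Set V)) ⧸ (K.comap (omegaPolar ω (K : Set V)).subtype)) →ₗ[ℝ]
        ((omegaPolar ω (K : Set V)) ⧸ (K.comap (omegaPolar ω (K : Set V)).subtype)) →ₗ[ℝ]
        (Fin k → ℝ),
      ∀ Y Z : omegaPolar ω (K : Set V),
        ωbar (Submodule.Quotient.mk Y) (Submodule.Quotient.mk Z) = ω (Y : V) (Z : V)) ∧
    (∀ ωbar :
        ((omegaPolar ω (K : Set V)) ⧸ (K.comap (omegaPolar ω (K : Set V)).subtype)) →ₗ[ℝ]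
        ((omegaPolar ω (K : Set V)) ⧸ (K.comap (omegaPolar ω (K : Set V)).subtype)) →ₗ[ℝ]
        (Fin k → ℝ),
      (∀ Y Z : omegaPolar ω (K : Set V),
        ωbar (Submodule.Quotient.mk Y) (Submodule.Quotient.mk Z) = ω (Y : V) (Z : V)) →
      (∀ a b, ωbar a b = - ωbar b a) ∧
      (Function.Injective ⇑ωbar ↔
        ∀ Z : V, Z ∈ omegaPolar ω ((omegaPolar ω (K : Set V) : Submodule ℝ V) : Set V) →
          Z ∈ omegaPolar ω (K : Set V) → Z ∈ K)) :=
  stmt15_general k V ω halt K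
end

section
/- Let V be a real vector space, S ⊆ Hom(V, ℝ^k) a linear subspace and P : S → V a linear map with η(P(η)) = 0 for all η ∈ S. Let K ⊆ V be a subspace such that (S ∩ A_K)° ⊆ K, where A_K := {η ∈ Hom(V, ℝ^k) : η(X) = 0 for all X ∈ K} and (S ∩ A_K)° := {X ∈ V : η(X) = 0 for all η ∈ S ∩ A_K}. Let q : V → V/K be the quotient map and q* : Hom(V/K, ℝ^k) → Hom(V, ℝ^k) the (injective) pullback map η̄ ↦ η̄ ∘ q, whose image is A_K. Define S_red := {η̄ ∈ Hom(V/K, ℝ^k) : q*η̄ ∈ S} and P_red : S_red → V/K by P_red(η̄) := q(P(q*η̄)). Then (S_red, P_red) is pointwise k-poly-Poisson data on V/K: η̄(P_red(η̄)) = 0 for all η̄ ∈ S_red, and S_red° = {0}. (This is the pointwise content of the poly-Poisson reduction Theorem 4.1: conditions (i) and (ii) of the definition hold for the reduced structure on M/G.) -/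
/-! A form on `V` vanishing on `K` descends to `V ⧸ K`, so the forms of `S_red` pull back to
exactly the forms in `S ∩ A_K`. Isotropy of `P_red` is then isotropy of `P` read through the
pullback, and a class annihilated by `S_red` has representatives annihilated by `S ∩ A_K`,
which lie in `K` by hypothesis. -/

theorem Submodule.mem_of_forall_comp_mkQ_mem_apply_eq_zero {R V W : Type*} [CommRing R]
    [AddCommGroup V] [Module R V] [AddCommGroup W] [Module R W]
    (S : Submodule R (V →ₗ[R] W)) (K : Submodule R V)
    (hred : ∀ X : V, (∀ η : V →ₗ[R] W, η ∈ S → (∀ Y ∈ K, η Y = 0) → η X = 0) → X ∈ K)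
    (X : V) (hX : ∀ ηbar : (V ⧸ K) →ₗ[R] W, ηbar ∘ₗ K.mkQ ∈ S → ηbar (K.mkQ X) = 0) :
    X ∈ K := by
  refine hred X fun η hηS hηK => ?_
  have hK : K ≤ LinearMap.ker η := hηK
  have hη := K.liftQ_mkQ η hK
  simpa [hη] using hX (K.liftQ η hK) (hη.symm ▸ hηS)

theorem stmt16_general (k : ℕ) (V : Type*) [AddCommGroup V] [Module ℝ V]
    (S : Submodule ℝ (V →ₗ[ℝ] (Fin k → ℝ))) (P : S →ₗ[ℝ] V)
    (h1 : ∀ η : S, (η : V →ₗ[ℝ] (Fin k → ℝ)) (P η) = 0)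
    (K : Submodule ℝ V)
    (hred : ∀ X : V,
      (∀ η : V →ₗ[ℝ] (Fin k → ℝ), η ∈ S → (∀ Y ∈ K, η Y = 0) → η X = 0) → X ∈ K) :
    (∀ (ηbar : (V ⧸ K) →ₗ[ℝ] (Fin k → ℝ)) (h : ηbar ∘ₗ K.mkQ ∈ S),
      ηbar (K.mkQ (P ⟨ηbar ∘ₗ K.mkQ, h⟩)) = 0) ∧
    (∀ x : V ⧸ K,
      (∀ ηbar : (V ⧸ K) →ₗ[ℝ] (Fin k → ℝ), ηbar ∘ₗ K.mkQ ∈ S → ηbar x = 0) → x = 0) := by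
  refine ⟨fun ηbar h => h1 ⟨ηbar ∘ₗ K.mkQ, h⟩, fun x hx => ?_⟩
  obtain ⟨X, rfl⟩ := K.mkQ_surjective x
  exact (Submodule.Quotient.mk_eq_zero K).2
    (S.mem_of_forall_comp_mkQ_mem_apply_eq_zero K hred X hx)

/-- Pointwise poly-Poisson reduction (Theorem 4.1). Given
`S ⊆ Hom(V, ℝ^k)` and linear `P : S → V` with `η(P(η)) = 0`, and a subspace `K ⊆ V`
with `(S ∩ A_K)° ⊆ K`, the reduced data on `V/K`, namely
`S_red = {η̄ : η̄ ∘ q ∈ S}` and `P_red(η̄) = q(P(η̄ ∘ q))` for the quotient map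
`q : V → V/K`, is pointwise `k`-poly-Poisson data: `η̄(P_red(η̄)) = 0` for all
`η̄ ∈ S_red`, and `S_red° = {0}`. -/
theorem stmt16 (k : ℕ) (hk : 0 < k) (V : Type*) [AddCommGroup V] [Module ℝ V]
    (S : Submodule ℝ (V →ₗ[ℝ] (Fin k → ℝ))) (P : S →ₗ[ℝ] V)
    (h1 : ∀ η : S, (η : V →ₗ[ℝ] (Fin k → ℝ)) (P η) = 0)
    (K : Submodule ℝ V)
    (hred : ∀ X : V,
      (∀ η : V →ₗ[ℝ] (Fin k → ℝ), η ∈ S → (∀ Y ∈ K, η Y = 0) → η X = 0) → X ∈ K) :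
    (∀ (ηbar : (V ⧸ K) →ₗ[ℝ] (Fin k → ℝ)) (h : ηbar ∘ₗ K.mkQ ∈ S),
      ηbar (K.mkQ (P ⟨ηbar ∘ₗ K.mkQ, h⟩)) = 0) ∧
    (∀ x : V ⧸ K,
      (∀ ηbar : (V ⧸ K) →ₗ[ℝ] (Fin k → ℝ), ηbar ∘ₗ K.mkQ ∈ S → ηbar x = 0) → x = 0) :=
  stmt16_general k V S P h1 K hred
end
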